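/- If π, σ ∈ S̃_n and π ≺_A σ, then λ(π) < λ(σ) in dominance order on partitions. -/

import Mathlib

open scoped TensorProduct

/-- Membership in the affine symmetric group `S̃_n`, viewed inside `Equiv.Perm ℤ`. -/
def IsAffine (n : ℕ) (π : Equiv.Perm ℤ) : Prop :=
  (∀ i : ℤ, π (i + n) = π i + n) ∧
  (∑ i ∈ Finset.Icc (1 : ℤ) (n : ℤ), π i) = ∑ i ∈ Finset.Icc (1 : ℤ) (n : ℤ), i

/-- The underlying function of the affine reflection `t_{ij}`. -/
def affTFun (n : ℕ) (i j k : ℤ) : ℤ :=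
  if (k - i) % (n : ℤ) = 0 then k - i + j
  else if (k - j) % (n : ℤ) = 0 then k - j + i
  else k

theorem affTFun_involutive {n : ℕ} {i j : ℤ} (h : ¬ (j - i) % (n : ℤ) = 0) :
    Function.Involutive (affTFun n i j) := by
  have key : ∀ a : ℤ, a % (n : ℤ) = 0 ↔ (n : ℤ) ∣ a :=
    fun a => (@Int.dvd_iff_emod_eq_zero (n : ℤ) a).symm
  rw [key] at h
  intro k
  by_cases h1 : (n : ℤ) ∣ (k - i)
  · have h2 : ¬ (n : ℤ) ∣ (k - i + j - i) := by
      intro hd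
      apply h
      have h5 : j - i = (k - i + j - i) - (k - i) := by ring
      rw [h5]
      exact dvd_sub hd h1
    have h3 : (n : ℤ) ∣ (k - i + j - j) := by
      have h5 : k - i + j - j = k - i := by ring
      rw [h5]; exact h1
    have e1 : affTFun n i j k = k - i + j := by simp [affTFun, key, h1]
    have e2 : affTFun n i j (k - i + j) = k := by
      simp only [affTFun, key]
      rw [if_neg h2, if_pos h3]
      ring
    rw [e1, e2]
  · by_cases h2 : (n : ℤ) ∣ (k - j)
    · have h3 : (n : ℤ) ∣ (k - j + i - i) := by
        have h5 : k - j + i - i = k - j := by ring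
        rw [h5]; exact h2
      have e1 : affTFun n i j k = k - j + i := by simp [affTFun, key, h1, h2]
      have e2 : affTFun n i j (k - j + i) = k := by
        simp only [affTFun, key]
        rw [if_pos h3]
        ring
      rw [e1, e2]
    · have e1 : affTFun n i j k = k := by simp [affTFun, key, h1, h2]
      rw [e1, e1]

/-- The affine reflection `t_{ij}` (interpreted as the identity when `i ≡ j (mod n)`). -/
noncomputable def affT (n : ℕ) (i j : ℤ) : Equiv.Perm ℤ :=
  if h : (j - i) % (n : ℤ) = 0 then 1
  else Function.Involutive.toPerm _ (affTFun_involutive h)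

/-- The simple reflection `s_i = t_{i,i+1}` of `S̃_n`. -/
noncomputable def affS (n : ℕ) (i : ℤ) : Equiv.Perm ℤ := affT n i (i + 1)

/-- Coxeter length: minimal length of a word in the simple reflections `s_1, …, s_n`. -/
noncomputable def wordLength (n : ℕ) (π : Equiv.Perm ℤ) : ℕ :=
  sInf {l : ℕ | ∃ w : List ℤ,
    (∀ x ∈ w, 1 ≤ x ∧ x ≤ (n : ℤ)) ∧ (w.map (affS n)).prod = π ∧ w.length = l}

/-- The set of inversions of `π`, up to the diagonal translation relation. -/
def InvPair (π : Equiv.Perm ℤ) : Type :=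
  {p : ℤ × ℤ // p.1 < p.2 ∧ π p.2 < π p.1}

/-- The number of equivalence classes of inversions of `π` under
`(a,b) ~ (a + mn, b + mn)`. -/
noncomputable def invLength (n : ℕ) (π : Equiv.Perm ℤ) : ℕ :=
  Nat.card (Quot fun p q : InvPair π =>
    ∃ m : ℤ, q.1.1 = p.1.1 + m * n ∧ q.1.2 = p.1.2 + m * n)

/-- Entry `c_i` of the code of an affine permutation. -/
noncomputable def codeEntry (π : Equiv.Perm ℤ) (i : ℤ) : ℕ :=
  Nat.card {j : ℤ // i < j ∧ π j < π i}

/-- Entry `ĉ_i` of the involution code of an affine involution. -/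
noncomputable def icodeEntry (z : Equiv.Perm ℤ) (i : ℤ) : ℕ :=
  Nat.card {j : ℤ // i < j ∧ z j < z i ∧ z j ≤ i}

/-- `ℓ'(z)`: `n` minus the number of orbits of `z` acting on `ℤ/nℤ`. -/
noncomputable def lprime (n : ℕ) (z : Equiv.Perm ℤ) : ℕ :=
  n - Nat.card (Quot fun a b : ZMod n => ((z (a.val : ℤ) : ℤ) : ZMod n) = b)

/-- The characterizing properties of the Demazure (0-Hecke) product on `S̃_n`:
closure, associativity, `s_i ∘ s_i = s_i`, and agreement with the group product
on length-additive factorizations. -/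
def IsDemazure (n : ℕ) (D : Equiv.Perm ℤ → Equiv.Perm ℤ → Equiv.Perm ℤ) : Prop :=
  (∀ a b, IsAffine n a → IsAffine n b → IsAffine n (D a b)) ∧
  (∀ a b c, IsAffine n a → IsAffine n b → IsAffine n c →
    D (D a b) c = D a (D b c)) ∧
  (∀ i : ℤ, D (affS n i) (affS n i) = affS n i) ∧
  (∀ a b, IsAffine n a → IsAffine n b →
    wordLength n (a * b) = wordLength n a + wordLength n b → D a b = a * b)

/-- The set of Hecke atoms `{π : π⁻¹ ∘ π = z}`. -/
def AHecke (n : ℕ) (D : Equiv.Perm ℤ → Equiv.Perm ℤ → Equiv.Perm ℤ)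
    (z : Equiv.Perm ℤ) : Set (Equiv.Perm ℤ) :=
  {π | IsAffine n π ∧ D π⁻¹ π = z}

/-- The set of atoms: minimal-length Hecke atoms. -/
def DemAtoms (n : ℕ) (D : Equiv.Perm ℤ → Equiv.Perm ℤ → Equiv.Perm ℤ)
    (z : Equiv.Perm ℤ) : Set (Equiv.Perm ℤ) :=
  {π | π ∈ AHecke n D z ∧ ∀ σ ∈ AHecke n D z, wordLength n π ≤ wordLength n σ}

/-- The Bruhat covering relation on `S̃_n`. -/
def BruhatCov (n : ℕ) (a b : Equiv.Perm ℤ) : Prop :=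
  (∃ i j : ℤ, i < j ∧ (j - i) % (n : ℤ) ≠ 0 ∧ b = a * affT n i j) ∧
  wordLength n b = wordLength n a + 1

/-- The Bruhat order on `S̃_n`. -/
def BruhatLE (n : ℕ) : Equiv.Perm ℤ → Equiv.Perm ℤ → Prop :=
  Relation.ReflTransGen (BruhatCov n)

/-- The covering relation of the Bruhat order restricted to involutions in `S̃_n`. -/
def BruhatCovI (n : ℕ) (y z : Equiv.Perm ℤ) : Prop :=
  IsAffine n y ∧ IsAffine n z ∧ y⁻¹ = y ∧ z⁻¹ = z ∧
  BruhatLE n y z ∧ y ≠ z ∧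
  ∀ w : Equiv.Perm ℤ, IsAffine n w → w⁻¹ = w →
    BruhatLE n y w → BruhatLE n w z → w = y ∨ w = z

/-- Strict dominance order on partitions (written as weakly decreasing functions). -/
def DomLT (p q : ℕ → ℕ) : Prop :=
  p ≠ q ∧ ∀ k : ℕ, ∑ i ∈ Finset.range k, p i ≤ ∑ i ∈ Finset.range k, q i

/-- The shape `λ(π)`: the transpose of the partition sorting the code of `π⁻¹`,
recorded as the weakly decreasing function `k ↦ λ(π)_{k+1}`. -/
noncomputable def affShape (n : ℕ) (π : Equiv.Perm ℤ) : ℕ → ℕ :=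
  fun k => Multiset.countP (fun x => k < x)
    ((Finset.Icc (1 : ℤ) (n : ℤ)).val.map (codeEntry π⁻¹))

/-- The shape `μ(z)`: the transpose of the partition sorting the involution code of `z`,
recorded as the weakly decreasing function `k ↦ μ(z)_{k+1}`. -/
noncomputable def invShape (n : ℕ) (z : Equiv.Perm ℤ) : ℕ → ℕ :=
  fun k => Multiset.countP (fun x => k < x)
    ((Finset.Icc (1 : ℤ) (n : ℤ)).val.map (icodeEntry z))

/-- The weakly decreasing rearrangement of a multiset of naturals, padded by zeros. -/
noncomputable def rearr (s : Multiset ℕ) : ℕ → ℕ :=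
  fun k => ((s.sort (· ≤ ·)).reverse).getD k 0

/-- Remove the entries of a list of integers that repeat an earlier residue mod `n`. -/
def dedupMod (n : ℕ) : List ℤ → List ℤ
  | [] => []
  | x :: xs => x :: dedupMod n (xs.filter fun y => (y - x) % (n : ℤ) ≠ 0)
termination_by l => l.length
decreasing_by
  simp only [List.length_cons]
  first
  | exact Nat.lt_succ_of_le (List.length_filter_le _ _)
  | (simp only [List.length_unattach]
     exact Nat.lt_succ_of_le ((List.length_filter_le _ _).trans_eq (List.length_attach ..)))
  | (simp only [List.length_unattach, List.length_map]
     exact Nat.lt_succ_of_le ((List.length_filter_le _ _).trans_eq (List.length_attach ..)))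
  | (simp only [List.unattach, List.length_map]
     exact Nat.lt_succ_of_le ((List.length_filter_le _ _).trans_eq (List.length_attach ..)))

/-- The window `[[z(a₁), a₁, z(a₂), a₂, …]]` of `α_min(z)⁻¹`, where `a₁ < a₂ < ⋯`
are the elements `a ∈ [n]` with `a ≤ z(a)`. -/
noncomputable def aminWindow (n : ℕ) (z : Equiv.Perm ℤ) : List ℤ :=
  dedupMod n
    ((((Finset.Icc (1 : ℤ) (n : ℤ)).sort (· ≤ ·)).filter fun a => a ≤ z a).flatMap
      fun a => [z a, a])

/-- Cyclically decreasing elements of `S̃_n`. -/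
def IsCycDec (n : ℕ) (π : Equiv.Perm ℤ) : Prop :=
  ∃ w : List ℤ,
    (∀ x ∈ w, 1 ≤ x ∧ x ≤ (n : ℤ)) ∧ (w.map (affS n)).prod = π ∧
    w.length = wordLength n π ∧
    w.Pairwise fun a b => (a + 1 - b) % (n : ℤ) ≠ 0

/-- The coefficient of the monomial `∏ₖ xₖ₊₁^(α k)` in Lam's affine Stanley symmetric
function `F_π`: the number of length-additive factorizations of `π` into cyclically
decreasing factors of lengths prescribed by `α`. -/
noncomputable def stanleyCoeff (n : ℕ) (π : Equiv.Perm ℤ) (α : ℕ →₀ ℕ) : ℕ :=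
  Nat.card {f : ℕ → Equiv.Perm ℤ //
    (∀ k, IsCycDec n (f k)) ∧ (∀ k, wordLength n (f k) = α k) ∧
    (∑ k ∈ α.support, α k) = wordLength n π ∧
    ∃ N : ℕ, (∀ k, N ≤ k → f k = 1) ∧ ((List.range N).map f).prod = π}

/-- The set `Φ⁻_r(y)` of Bruhat covers of `y` of the form `τⁿ_{i r}(y)` with `i < r`
and `i ∉ {r, y(r)} + nℤ`. -/
def PhiMinus (n : ℕ) (τ : ℤ → ℤ → Equiv.Perm ℤ → Equiv.Perm ℤ)
    (y : Equiv.Perm ℤ) (r : ℤ) : Set (Equiv.Perm ℤ) :=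
  {z | BruhatCovI n y z ∧ ∃ i : ℤ, i < r ∧ (i - r) % (n : ℤ) ≠ 0 ∧
    (i - y r) % (n : ℤ) ≠ 0 ∧ z = τ i r y}

/-- The set `Φ⁺_r(y)` of Bruhat covers of `y` of the form `τⁿ_{r j}(y)` with `r < j`
and `j ∉ {r, y(r)} + nℤ`. -/
def PhiPlus (n : ℕ) (τ : ℤ → ℤ → Equiv.Perm ℤ → Equiv.Perm ℤ)
    (y : Equiv.Perm ℤ) (r : ℤ) : Set (Equiv.Perm ℤ) :=
  {z | BruhatCovI n y z ∧ ∃ j : ℤ, r < j ∧ (j - r) % (n : ℤ) ≠ 0 ∧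
    (j - y r) % (n : ℤ) ≠ 0 ∧ z = τ r j y}

/-- The affine symmetric group as a subtype of `Equiv.Perm ℤ`. -/
abbrev AffPerm (n : ℕ) := {π : Equiv.Perm ℤ // IsAffine n π}

/-- The coproduct `Δ(π) = Σ_{π ≐ π'π''} π' ⊗ π''` on `ℚ S̃_n`. -/
noncomputable def affComul (n : ℕ) :
    (AffPerm n →₀ ℚ) →ₗ[ℚ] TensorProduct ℚ (AffPerm n →₀ ℚ) (AffPerm n →₀ ℚ) :=
  Finsupp.lift _ ℚ _ fun π : AffPerm n =>
    ∑ᶠ p ∈ {p : AffPerm n × AffPerm n |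
        p.1.val * p.2.val = π.val ∧
        wordLength n π.val = wordLength n p.1.val + wordLength n p.2.val},
      (Finsupp.single p.1 (1 : ℚ)) ⊗ₜ[ℚ] (Finsupp.single p.2 (1 : ℚ))


/-!
One step of `≺_A` is `π = v⁻¹`, `σ = w⁻¹` with `w = v ∘ φ`, where `φ` cyclically permutes every
block `{k, k + 1, k + 2} + nℤ`. Since `φ` preserves `{l | m < l}` for `m` outside the interior of
the blocks, both codes are read off from `T x = #{l > k + 2 | v l < x}`: at `k, k + 1, k + 2` the
code of `v` is `(T c + 2, T a, T b)` and that of `w` is `(T b + 1, T c + 1, T a)`, while the other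
entries of the window agree. As `T b ≤ T c`, the code of `v` arises from that of `w` by moving a
unit from a smaller entry to a larger one, which strictly lowers the transposed partition in
dominance order; transitivity handles the closure.
-/

namespace AffinePerm

variable {n : ℕ} {v w : Equiv.Perm ℤ}

lemma periodic_apply_sub_self (hv : ∀ i : ℤ, v (i + n) = v i + n) :
    Function.Periodic (fun i => v i - i) (n : ℤ) := fun i => by
  simp only [hv]; ring

lemma apply_add_mul (hv : ∀ i : ℤ, v (i + n) = v i + n) (i t : ℤ) :
    v (i + t * n) = v i + t * n := by
  have := (periodic_apply_sub_self hv).int_mul t i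
  simp only [Int.cast_id] at this
  linarith

lemma apply_eq_apply_add_of_dvd (hv : ∀ i : ℤ, v (i + n) = v i + n)
    (hw : ∀ i : ℤ, w (i + n) = w i + n) {k l d : ℤ} (hkl : (n : ℤ) ∣ l - k)
    (hk : w k = v (k + d)) : w l = v (l + d) := by
  obtain ⟨t, ht⟩ := hkl
  obtain rfl : l = k + t * n := by linarith
  rw [apply_add_mul hw, hk, ← apply_add_mul hv]
  ring_nf

lemma finite_setOf_lt_and_apply_lt (hn : 0 < n) (hv : ∀ i : ℤ, v (i + n) = v i + n)
    (m x : ℤ) : {l | m < l ∧ v l < x}.Finite := by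
  obtain ⟨D, hD⟩ := ((Set.finite_Ico 0 (n : ℤ)).image fun i => v i - i).bddBelow
  refine (Set.finite_Ioo m (x - D)).subset fun l ⟨hml, hlx⟩ => ⟨hml, ?_⟩
  obtain ⟨r, hr, hlr⟩ := (periodic_apply_sub_self hv).exists_mem_Ico₀ (by exact_mod_cast hn) l
  have := hD ⟨r, hr, hlr.symm⟩
  linarith

end AffinePerm

noncomputable def tailCount (f : ℤ → ℤ) (m x : ℤ) : ℕ :=
  Nat.card {l : ℤ | m < l ∧ f l < x}

lemma codeEntry_eq_tailCount (v : Equiv.Perm ℤ) (i : ℤ) :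
    codeEntry v i = tailCount v i (v i) := rfl

lemma tailCount_eq_tailCount_add_one_add {f : ℤ → ℤ} {m x : ℤ}
    (hfin : {l | m < l ∧ f l < x}.Finite) :
    tailCount f m x = tailCount f (m + 1) x + if f (m + 1) < x then 1 else 0 := by
  rw [tailCount, tailCount, Nat.card_coe_set_eq, Nat.card_coe_set_eq]
  split_ifs with h
  · have hfin' : {l | m + 1 < l ∧ f l < x}.Finite :=
      hfin.subset fun l hl => ⟨by linarith [hl.1], hl.2⟩
    rw [← Set.ncard_insert_of_notMem (fun hl => lt_irrefl _ hl.1) hfin']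
    congr 1
    ext l
    simp only [Set.mem_insert_iff, Set.mem_ofPred_eq]
    grind
  · rw [add_zero]
    congr 1
    ext l
    simp only [Set.mem_ofPred_eq]
    grind

lemma tailCount_mono {f : ℤ → ℤ} {m x y : ℤ} (hfin : {l | m < l ∧ f l < y}.Finite)
    (hxy : x ≤ y) : tailCount f m x ≤ tailCount f m y :=
  Nat.card_mono hfin fun _ ⟨hl, hfl⟩ => ⟨hl, hfl.trans_le hxy⟩

lemma tailCount_comp_equiv (f : ℤ → ℤ) (e : ℤ ≃ ℤ) {m : ℤ} (he : ∀ l, m < e l ↔ m < l)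
    (x : ℤ) : tailCount (f ∘ e) m x = tailCount f m x :=
  Nat.card_congr (e.subtypeEquiv fun l => by simp [he])

lemma codeEntry_periodic {n : ℕ} {v : Equiv.Perm ℤ} (hv : ∀ i : ℤ, v (i + n) = v i + n) :
    Function.Periodic (codeEntry v) (n : ℤ) := fun i =>
  (Nat.card_congr ((Equiv.addRight (n : ℤ)).subtypeEquiv fun l => by simp [hv])).symm

lemma map_Ico_add_one_eq {α : Type*} {n : ℕ} (hn : 0 < n) {f : ℤ → α}
    (hf : Function.Periodic f (n : ℤ)) (k : ℤ) :
    (Finset.Ico (k + 1) (k + 1 + n)).val.map f = (Finset.Ico k (k + n)).val.map f := by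
  have hright : Finset.Ico (k + 1) (k + 1 + n) = insert (k + n) (Finset.Ico (k + 1) (k + n)) := by
    rw [show k + 1 + n = k + n + 1 by ring, Finset.Ico_add_one_right_eq_Icc,
      Finset.Ico_insert_right (by omega)]
  rw [hright, ← Finset.insert_Ico_add_one_left_eq_Ico (show k < k + n by omega),
    Finset.insert_val_of_notMem (by simp), Finset.insert_val_of_notMem (by simp),
    Multiset.map_cons, Multiset.map_cons, hf]

lemma map_Icc_one_eq_map_Ico {α : Type*} {n : ℕ} (hn : 0 < n) {f : ℤ → α}
    (hf : Function.Periodic f (n : ℤ)) (k : ℤ) :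
    (Finset.Icc 1 (n : ℤ)).val.map f = (Finset.Ico k (k + n)).val.map f := by
  have hg : Function.Periodic (fun k : ℤ => (Finset.Ico k (k + n)).val.map f) 1 :=
    map_Ico_add_one_eq hn hf
  have := (hg.int_mul_eq k).trans (hg.int_mul_eq 1).symm
  simp only [Int.cast_id, mul_one] at this
  rw [this, add_comm, Finset.Ico_add_one_right_eq_Icc]

lemma Ico_val_eq_cons_cons_cons {n : ℕ} (hn : 3 ≤ n) (k : ℤ) :
    (Finset.Ico k (k + n)).val =
      k ::ₘ (k + 1) ::ₘ (k + 2) ::ₘ (Finset.Ico (k + 3) (k + n)).val := by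
  have hpeel (a : ℤ) (ha : a < k + n) :
      (Finset.Ico a (k + n)).val = a ::ₘ (Finset.Ico (a + 1) (k + n)).val := by
    rw [← Finset.insert_Ico_add_one_left_eq_Ico ha, Finset.insert_val_of_notMem (by simp)]
  rw [hpeel k (by omega), hpeel (k + 1) (by omega), hpeel (k + 1 + 1) (by omega)]
  ring_nf

lemma map_codeEntry_Icc_eq_cons {n : ℕ} (hn : 3 ≤ n) {u : Equiv.Perm ℤ}
    (hu : ∀ i : ℤ, u (i + n) = u i + n) (k : ℤ) :
    (Finset.Icc 1 (n : ℤ)).val.map (codeEntry u) =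
      codeEntry u k ::ₘ codeEntry u (k + 1) ::ₘ codeEntry u (k + 2) ::ₘ
        (Finset.Ico (k + 3) (k + n)).val.map (codeEntry u) := by
  rw [map_Icc_one_eq_map_Ico (by omega) (codeEntry_periodic hu) k,
    Ico_val_eq_cons_cons_cons hn, Multiset.map_cons, Multiset.map_cons, Multiset.map_cons]

lemma sum_range_countP_lt (s : Multiset ℕ) (K : ℕ) :
    ∑ i ∈ Finset.range K, s.countP (i < ·) = (s.map (min · K)).sum := by
  have hmin (a : ℕ) : ∑ i ∈ Finset.range K, (if i < a then 1 else 0) = min a K := by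
    induction K with
    | zero => simp
    | succ K ih => rw [Finset.sum_range_succ, ih]; split_ifs <;> omega
  induction s using Multiset.induction_on with
  | empty => simp
  | cons a s ih =>
    simp only [Multiset.countP_cons, Multiset.map_cons, Multiset.sum_cons,
      Finset.sum_add_distrib, ih, hmin]
    omega

lemma DomLT.trans {p q r : ℕ → ℕ} (hpq : DomLT p q) (hqr : DomLT q r) : DomLT p r := by
  refine ⟨fun hpr => hpq.1 ?_, fun k => (hpq.2 k).trans (hqr.2 k)⟩
  subst hpr
  have hsum (K : ℕ) : ∑ i ∈ Finset.range K, p i = ∑ i ∈ Finset.range K, q i :=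
    (hpq.2 K).antisymm (hqr.2 K)
  funext k
  have := hsum (k + 1)
  rw [Finset.sum_range_succ, Finset.sum_range_succ, hsum k] at this
  omega

lemma domLT_countP_cons_cons {x y : ℕ} (hyx : y < x) (R : Multiset ℕ) :
    DomLT (fun k => ((x + 1) ::ₘ y ::ₘ R).countP (k < ·))
      (fun k => (x ::ₘ (y + 1) ::ₘ R).countP (k < ·)) := by
  refine ⟨fun h => ?_, fun K => ?_⟩
  · have := congrFun h x
    simp only [Multiset.countP_cons] at this
    split_ifs at this <;> omega
  · simp only [sum_range_countP_lt, Multiset.map_cons, Multiset.sum_cons]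
    omega

/-- In window notation, `v = [..., c, a, b, ...]` and `w = [..., b, c, a, ...]` with `a < b < c`
at positions `k, k + 1, k + 2` and their translates by multiples of `n`. -/
structure IsRotation (n : ℕ) (v w : Equiv.Perm ℤ) (k : ℤ) : Prop where
  lt_left : v (k + 1) < v (k + 2)
  lt_right : v (k + 2) < v k
  apply_left : w k = v (k + 2)
  apply_mid : w (k + 1) = v k
  apply_right : w (k + 2) = v (k + 1)
  apply_of_not_dvd : ∀ m, ¬ (n : ℤ) ∣ m - k → ¬ (n : ℤ) ∣ m - (k + 1) →
    ¬ (n : ℤ) ∣ m - (k + 2) → w m = v m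

namespace IsRotation

open AffinePerm

variable {n : ℕ} {v w : Equiv.Perm ℤ} {k : ℤ}

lemma three_le (hn : 0 < n) (hv : ∀ i : ℤ, v (i + n) = v i + n) (h : IsRotation n v w k) :
    3 ≤ n := by
  by_contra hlt
  interval_cases n <;>
  · have := hv k
    push_cast at this
    linarith [h.lt_left, h.lt_right]

lemma apply_cases (hv : ∀ i : ℤ, v (i + n) = v i + n) (hw : ∀ i : ℤ, w (i + n) = w i + n)
    (h : IsRotation n v w k) (l : ℤ) :
    ((n : ℤ) ∣ l - k ∧ w l = v (l + 2)) ∨ ((n : ℤ) ∣ l - (k + 1) ∧ w l = v (l + -1)) ∨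
      ((n : ℤ) ∣ l - (k + 2) ∧ w l = v (l + -1)) ∨ w l = v l := by
  by_cases h0 : (n : ℤ) ∣ l - k
  · exact Or.inl ⟨h0, apply_eq_apply_add_of_dvd hv hw h0 h.apply_left⟩
  by_cases h1 : (n : ℤ) ∣ l - (k + 1)
  · exact Or.inr <| Or.inl ⟨h1, apply_eq_apply_add_of_dvd hv hw h1 <| by
      rw [h.apply_mid, add_neg_cancel_right]⟩
  by_cases h2 : (n : ℤ) ∣ l - (k + 2)
  · exact Or.inr <| Or.inr <| Or.inl ⟨h2, apply_eq_apply_add_of_dvd hv hw h2 <| by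
      rw [h.apply_right]; ring_nf⟩
  exact Or.inr <| Or.inr <| Or.inr <| h.apply_of_not_dvd l h0 h1 h2

/-- `v⁻¹ * w` permutes each block `{k, k + 1, k + 2} + nℤ`, so it preserves `{l | m < l}`
whenever `m` is not inside a block. -/
lemma tailCount_eq (hv : ∀ i : ℤ, v (i + n) = v i + n) (hw : ∀ i : ℤ, w (i + n) = w i + n)
    (h : IsRotation n v w k) {m : ℤ} (hm0 : ¬ (n : ℤ) ∣ m - k) (hm1 : ¬ (n : ℤ) ∣ m - (k + 1))
    (x : ℤ) : tailCount w m x = tailCount v m x := by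
  have hcomp : (w : ℤ → ℤ) = v ∘ (v⁻¹ * w : Equiv.Perm ℤ) := by
    ext l; simp
  rw [hcomp]
  refine tailCount_comp_equiv v _ (fun l => ?_) x
  have hshift (d : ℤ) (hd : w l = v (l + d)) : (v⁻¹ * w) l = l + d := by
    simp [Equiv.Perm.mul_apply, hd]
  rcases h.apply_cases hv hw l with ⟨hl, hd⟩ | ⟨hl, hd⟩ | ⟨hl, hd⟩ | hd
  · have : m ≠ l := by rintro rfl; exact hm0 hl
    have : m ≠ l + 1 := by rintro rfl; exact hm1 (by convert hl using 1; ring)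
    rw [hshift 2 hd]
    omega
  · have : m ≠ l - 1 := by rintro rfl; exact hm0 (by convert hl using 1; ring)
    rw [hshift (-1) hd]
    omega
  · have : m ≠ l - 1 := by rintro rfl; exact hm1 (by convert hl using 1; ring)
    rw [hshift (-1) hd]
    omega
  · rw [hshift 0 (by rw [hd, add_zero]), add_zero]

lemma tailCount_add_two (hn : 0 < n) (hv : ∀ i : ℤ, v (i + n) = v i + n)
    (hw : ∀ i : ℤ, w (i + n) = w i + n) (h : IsRotation n v w k) (x : ℤ) :
    tailCount w (k + 2) x = tailCount v (k + 2) x := by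
  have hn3 : (3 : ℤ) ≤ n := by exact_mod_cast h.three_le hn hv
  refine h.tailCount_eq hv hw (fun hd => ?_) (fun hd => ?_) x
  · have := Int.le_of_dvd two_pos (by simpa using hd); omega
  · have := Int.le_of_dvd one_pos (by simpa [sub_add_eq_sub_sub] using hd); omega

lemma codeEntry_eq_of_lt_of_lt (hv : ∀ i : ℤ, v (i + n) = v i + n)
    (hw : ∀ i : ℤ, w (i + n) = w i + n) (h : IsRotation n v w k) {i : ℤ} (hi : k + 3 ≤ i)
    (hin : i < k + n) : codeEntry w i = codeEntry v i := by
  have hnd (d : ℤ) (hd0 : 0 < d) (hdn : d < n) : ¬ (n : ℤ) ∣ d :=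
    fun hd => (Int.le_of_dvd hd0 hd).not_gt hdn
  have h0 := hnd (i - k) (by omega) (by omega)
  have h1 := hnd (i - (k + 1)) (by omega) (by omega)
  rw [codeEntry_eq_tailCount, h.apply_of_not_dvd i h0 h1 (hnd _ (by omega) (by omega)),
    h.tailCount_eq hv hw h0 h1, codeEntry_eq_tailCount]

theorem domLT_affShape (hn : 0 < n) (hv : ∀ i : ℤ, v (i + n) = v i + n)
    (hw : ∀ i : ℤ, w (i + n) = w i + n) (h : IsRotation n v w k) :
    DomLT (affShape n v⁻¹) (affShape n w⁻¹) := by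
  have hn3 := h.three_le hn hv
  have hfin := finite_setOf_lt_and_apply_lt hn hv
  have hfin' := finite_setOf_lt_and_apply_lt hn hw
  have hk : k + 1 + 1 = k + 2 := by ring
  set T := tailCount v (k + 2)
  have hv0 : codeEntry v k = T (v k) + 2 := by
    rw [codeEntry_eq_tailCount, tailCount_eq_tailCount_add_one_add (hfin _ _),
      tailCount_eq_tailCount_add_one_add (hfin _ _), hk,
      if_pos h.lt_right, if_pos (h.lt_left.trans h.lt_right)]
  have hv1 : codeEntry v (k + 1) = T (v (k + 1)) := by
    rw [codeEntry_eq_tailCount, tailCount_eq_tailCount_add_one_add (hfin _ _), hk,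
      if_neg h.lt_left.not_gt, add_zero]
  have hw0 : codeEntry w k = T (v (k + 2)) + 1 := by
    rw [codeEntry_eq_tailCount, tailCount_eq_tailCount_add_one_add (hfin' _ _),
      tailCount_eq_tailCount_add_one_add (hfin' _ _), hk, h.tailCount_add_two hn hv hw,
      h.apply_left, h.apply_mid, h.apply_right, if_pos h.lt_left, if_neg h.lt_right.not_gt]
  have hw1 : codeEntry w (k + 1) = T (v k) + 1 := by
    rw [codeEntry_eq_tailCount, tailCount_eq_tailCount_add_one_add (hfin' _ _), hk,
      h.tailCount_add_two hn hv hw, h.apply_mid, h.apply_right,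
      if_pos (h.lt_left.trans h.lt_right)]
  have hw2 : codeEntry w (k + 2) = T (v (k + 1)) := by
    rw [codeEntry_eq_tailCount, h.tailCount_add_two hn hv hw, h.apply_right]
  have hrest : (Finset.Ico (k + 3) (k + n)).val.map (codeEntry w) =
      (Finset.Ico (k + 3) (k + n)).val.map (codeEntry v) :=
    Multiset.map_congr rfl fun i hi => by
      simp only [Finset.mem_val, Finset.mem_Ico] at hi
      exact h.codeEntry_eq_of_lt_of_lt hv hw hi.1 hi.2
  have hT : T (v (k + 2)) < T (v k) + 1 :=
    Nat.lt_succ_of_le (tailCount_mono (hfin _ _) h.lt_right.le)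
  unfold affShape
  rw [inv_inv, inv_inv, map_codeEntry_Icc_eq_cons hn3 hv k,
    map_codeEntry_Icc_eq_cons hn3 hw k, hrest, hv0, hv1, hw0, hw1, hw2,
    codeEntry_eq_tailCount v (k + 2),
    Multiset.cons_swap (T (v (k + 1))), Multiset.cons_swap (T (v (k + 2)) + 1)]
  exact domLT_countP_cons_cons hT _

end IsRotation

theorem shape_lt_of_atom_order_general (n : ℕ) (hn : 0 < n)
    (π σ : Equiv.Perm ℤ)
    (h : Relation.TransGen
      (fun x y : Equiv.Perm ℤ =>
        ∃ v w : Equiv.Perm ℤ, IsAffine n v ∧ IsAffine n w ∧ x = v⁻¹ ∧ y = w⁻¹ ∧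
          ∃ k a b c : ℤ, a < b ∧ b < c ∧
            v k = c ∧ v (k + 1) = a ∧ v (k + 2) = b ∧
            w k = b ∧ w (k + 1) = c ∧ w (k + 2) = a ∧
            (∀ m : ℤ, (m - k) % (n : ℤ) ≠ 0 → (m - (k + 1)) % (n : ℤ) ≠ 0 →
              (m - (k + 2)) % (n : ℤ) ≠ 0 → v m = w m))
      π σ) :
    DomLT (affShape n π) (affShape n σ) := by
  refine Relation.TransGen.trans_induction_on h ?_ fun _ _ => DomLT.trans
  rintro _ _ ⟨v, w, hv, hw, rfl, rfl, k, a, b, c, hab, hbc, hv0, hv1, hv2, hw0, hw1, hw2, hvw⟩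
  refine IsRotation.domLT_affShape hn hv.1 hw.1
    ⟨by rw [hv1, hv2]; exact hab, by rw [hv2, hv0]; exact hbc, by rw [hw0, hv2],
      by rw [hw1, hv0], by rw [hw2, hv1], fun m h0 h1 h2 => ?_⟩
  exact (hvw m (mt Int.dvd_of_emod_eq_zero h0) (mt Int.dvd_of_emod_eq_zero h1)
    (mt Int.dvd_of_emod_eq_zero h2)).symm

/-- if `π ≺_A σ` then `λ(π) < λ(σ)` in dominance order. -/
theorem shape_lt_of_atom_order (n : ℕ) (hn : 0 < n)
    (π σ : Equiv.Perm ℤ) (hπ : IsAffine n π) (hσ : IsAffine n σ)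
    (h : Relation.TransGen
      (fun x y : Equiv.Perm ℤ =>
        ∃ v w : Equiv.Perm ℤ, IsAffine n v ∧ IsAffine n w ∧ x = v⁻¹ ∧ y = w⁻¹ ∧
          ∃ k a b c : ℤ, a < b ∧ b < c ∧
            v k = c ∧ v (k + 1) = a ∧ v (k + 2) = b ∧
            w k = b ∧ w (k + 1) = c ∧ w (k + 2) = a ∧
            (∀ m : ℤ, (m - k) % (n : ℤ) ≠ 0 → (m - (k + 1)) % (n : ℤ) ≠ 0 →
              (m - (k + 2)) % (n : ℤ) ≠ 0 → v m = w m))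
      π σ) :
    DomLT (affShape n π) (affShape n σ) :=
  shape_lt_of_atom_order_general n hn π σ h
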